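/- arXiv:0711.0834 — 4 statements merged into one kernel-verified Lean document; each statement's English description precedes it below -/
import Mathlib

section
/- The signum function on ℤ is the unique function s : ℤ → ℤ satisfying s(0) = 0, s(1) = 1, s(−1) = −1, and s(k + s(k)) = s(k) for all k ∈ ℤ. -/
/-- The signum function is the unique function `s : ℤ → ℤ` satisfying
`s 0 = 0`, `s 1 = 1`, `s (-1) = -1`, and `s (k + s k) = s k` for all `k`. -/
theorem sign_unique (s : ℤ → ℤ) (h0 : s 0 = 0) (h1 : s 1 = 1)
    (hm1 : s (-1) = -1) (h4 : ∀ k : ℤ, s (k + s k) = s k) :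
    s = Int.sign := by
  have hpos : ∀ n : ℕ, s (n + 1) = 1 := by
    intro n
    induction n with
    | zero => simpa using h1
    | succ m ih =>
      have := h4 ((m : ℤ) + 1)
      rw [ih] at this
      rw [show ((m + 1 : ℕ) : ℤ) + 1 = ((m : ℤ) + 1) + 1 by push_cast; ring, this]
  have hneg : ∀ n : ℕ, s (-(n + 1)) = -1 := by
    intro n
    induction n with
    | zero => simpa using hm1
    | succ m ih =>
      have := h4 (-((m : ℤ) + 1))
      rw [ih] at this
      rw [show -(((m + 1 : ℕ) : ℤ) + 1) = -((m : ℤ) + 1) + -1 by push_cast; ring, this]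
  funext k
  cases k with
  | ofNat n =>
    cases n with
    | zero => simpa using h0
    | succ m => simpa using hpos m
  | negSucc n =>
    show s (Int.negSucc n) = -1
    rw [Int.negSucc_eq]
    exact hneg n
end

section
/- Component composition is in general not associative: there exist process components C₁, C₂, C₃ (given by finite labelled transition systems with interfaces, composed according to the ACC rules where actions whose interface multiplicity condition fails are blocked) such that (C₁ ∥ C₂) ∥ C₃ is not bisimilar to C₁ ∥ (C₂ ∥ C₃). -/
/-- Actions: active `f.m@g`, passive `f̄.m@g`, neutral `f.m@̲g`. -/
inductive Act (L M : Type) : Type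
  | act : L → M → L → Act L M
  | pas : L → M → L → Act L M
  | neu : L → M → L → Act L M

/-- Interfaces: the free abelian group on active interface elements. -/
abbrev IFace (L M : Type) : Type := (L × M × L) →₀ ℤ

/-- Process terms: finite (hence finitely branching) labelled transition
systems presented by ACP syntax, with encapsulation `∂_H` and
interface-compliant encapsulation `∂_I`. -/
inductive Proc (L M : Type) : Type
  | delta
  | atom (a : Act L M)
  | alt (p q : Proc L M)
  | seq (p q : Proc L M)
  | par (p q : Proc L M)
  | leftm (p q : Proc L M)
  | cm (p q : Proc L M)
  | encap (H : Set (Act L M)) (p : Proc L M)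
  | iencap (I : IFace L M) (p : Proc L M)

/-- The communication function: a matching active/passive pair synchronizes
into the corresponding neutral action; all other communications are undefined. -/
inductive Comm {L M : Type} : Act L M → Act L M → Act L M → Prop
  | ap (f g : L) (m : M) : Comm (.act f m g) (.pas g m f) (.neu f m g)
  | pa (f g : L) (m : M) : Comm (.pas g m f) (.act f m g) (.neu f m g)

/-- Which actions the interface-compliant encapsulation `∂_I` lets through:
an active action `f.m@g` iff `mult_{f.m@g}(I) > 0`, a passive action `f̄.m@g`
iff `mult_{g.m@f}(I) < 0`, and every neutral action. -/
def allowed {L M : Type} (I : IFace L M) : Act L M → Prop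
  | .act f m g => 0 < I (f, m, g)
  | .pas f m g => I (g, m, f) < 0
  | .neu _ _ _ => True

/-- Structural operational semantics. `Step p a none` means `p` can perform
`a` and terminate successfully; `Step p a (some p')` means `p` can perform `a`
and proceed as `p'`. -/
inductive Step {L M : Type} : Proc L M → Act L M → Option (Proc L M) → Prop
  | atom (a : Act L M) : Step (.atom a) a none
  | altL {p q a o} : Step p a o → Step (.alt p q) a o
  | altR {p q a o} : Step q a o → Step (.alt p q) a o
  | seqT {p q a} : Step p a none → Step (.seq p q) a (some q)
  | seqS {p q a p'} : Step p a (some p') → Step (.seq p q) a (some (.seq p' q))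
  | parLT {p q a} : Step p a none → Step (.par p q) a (some q)
  | parLS {p q a p'} : Step p a (some p') → Step (.par p q) a (some (.par p' q))
  | parRT {p q a} : Step q a none → Step (.par p q) a (some p)
  | parRS {p q a q'} : Step q a (some q') → Step (.par p q) a (some (.par p q'))
  | parCTT {p q a b c} : Comm a b c → Step p a none → Step q b none →
      Step (.par p q) c none
  | parCTS {p q a b c q'} : Comm a b c → Step p a none → Step q b (some q') →
      Step (.par p q) c (some q')
  | parCST {p q a b c p'} : Comm a b c → Step p a (some p') → Step q b none →
      Step (.par p q) c (some p')
  | parCSS {p q a b c p' q'} : Comm a b c → Step p a (some p') → Step q b (some q') →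
      Step (.par p q) c (some (.par p' q'))
  | leftmT {p q a} : Step p a none → Step (.leftm p q) a (some q)
  | leftmS {p q a p'} : Step p a (some p') → Step (.leftm p q) a (some (.par p' q))
  | cmTT {p q a b c} : Comm a b c → Step p a none → Step q b none →
      Step (.cm p q) c none
  | cmTS {p q a b c q'} : Comm a b c → Step p a none → Step q b (some q') →
      Step (.cm p q) c (some q')
  | cmST {p q a b c p'} : Comm a b c → Step p a (some p') → Step q b none →
      Step (.cm p q) c (some p')
  | cmSS {p q a b c p' q'} : Comm a b c → Step p a (some p') → Step q b (some q') →
      Step (.cm p q) c (some (.par p' q'))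
  | encap {H p a o} : Step p a o → a ∉ H → Step (.encap H p) a (o.map (.encap H))
  | iencap {I p a o} : Step p a o → allowed I a → Step (.iencap I p) a (o.map (.iencap I))

/-- Lifting of a relation to optional continuations. -/
def OptRel {α : Type} (R : α → α → Prop) : Option α → Option α → Prop
  | none, none => True
  | some x, some y => R x y
  | _, _ => False

/-- A (strong) bisimulation: symmetric and matching transitions/termination. -/
def IsBisim {L M : Type} (R : Proc L M → Proc L M → Prop) : Prop :=
  (∀ p q, R p q → R q p) ∧
  (∀ p q a o, R p q → Step p a o → ∃ o', Step q a o' ∧ OptRel R o o')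

/-- Bisimilarity. -/
def Bisim {L M : Type} (p q : Proc L M) : Prop := ∃ R, IsBisim R ∧ R p q

/-- A process component is a pair of an interface and a process. -/
abbrev Comp (L M : Type) : Type := IFace L M × Proc L M

/-- Component composition (axiom CC2):
`(I,x) ∥ (J,y) = (I+J, ∂_{I+J}(∂_I(x) ∥ ∂_J(y)))`. -/
noncomputable def compose {L M : Type} (c d : Comp L M) : Comp L M :=
  (c.1 + d.1,
   Proc.iencap (c.1 + d.1) (Proc.par (Proc.iencap c.1 c.2) (Proc.iencap d.1 d.2)))

/-- Bisimilarity of components: equal interfaces and bisimilar behaviours. -/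
def CompBisim {L M : Type} (c d : Comp L M) : Prop := c.1 = d.1 ∧ Bisim c.2 d.2

noncomputable section NA

/-- Interface of `C₁`: `ḡ.m@f + g.m'@f` with `f = 0`, `g = 1`, `m = 0`, `m' = 1`. -/
def I1 : IFace ℕ ℕ := Finsupp.single (0,0,1) (-1) + Finsupp.single (1,1,0) 1
/-- Interface of `C₂`: `f.m@g`. -/
def I2 : IFace ℕ ℕ := Finsupp.single (0,0,1) 1
/-- Interface of `C₃`: `ḡ.m@f + g.m''@f` with `m'' = 2`. -/
def I3 : IFace ℕ ℕ := Finsupp.single (0,0,1) (-1) + Finsupp.single (1,2,0) 1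

/-- Process of `C₁`: `ḡ.m@f · g.m'@f`. -/
def P1 : Proc ℕ ℕ := .seq (.atom (.pas 1 0 0)) (.atom (.act 1 1 0))
/-- Process of `C₂`: `f.m@g`. -/
def P2 : Proc ℕ ℕ := .atom (.act 0 0 1)
/-- Process of `C₃`: `ḡ.m@f · g.m''@f`. -/
def P3 : Proc ℕ ℕ := .seq (.atom (.pas 1 0 0)) (.atom (.act 1 2 0))

lemma hI1neg : allowed I1 (Act.pas 1 0 0) := by
  show I1 (0,0,1) < 0
  simp [I1, Finsupp.single_apply]

lemma hI1pos : allowed I1 (Act.act 1 1 0) := by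
  show 0 < I1 (1,1,0)
  simp [I1, Finsupp.single_apply]

lemma hI2pos : allowed I2 (Act.act 0 0 1) := by
  show 0 < I2 (0,0,1)
  simp [I2, Finsupp.single_apply]

lemma hI12pos : allowed (I1 + I2) (Act.act 1 1 0) := by
  show 0 < (I1 + I2) (1,1,0)
  simp [I1, I2, Finsupp.single_apply]

lemma hKpos : allowed ((I1 + I2) + I3) (Act.act 1 1 0) := by
  show 0 < ((I1 + I2) + I3) (1,1,0)
  simp [I1, I2, I3, Finsupp.single_apply]

lemma hI23not : ¬ allowed (I2 + I3) (Act.act 0 0 1) := by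
  show ¬ (0 < (I2 + I3) (0,0,1))
  simp [I2, I3, Finsupp.single_apply]

/-- No communication results in an active action. -/
lemma comm_no_act {a b : Act ℕ ℕ} {f m g : ℕ} (h : Comm a b (.act f m g)) : False := by
  cases h

/-- Generic inversion for interface-compliant encapsulation. -/
lemma iencap_inv {L M : Type} {I : IFace L M} {p : Proc L M} {a o}
    (h : Step (.iencap I p) a o) :
    ∃ o₀, Step p a o₀ ∧ allowed I a ∧ o = o₀.map (.iencap I) := by
  cases h with
  | iencap h' ha => exact ⟨_, h', ha, rfl⟩

lemma X1_inv {a o} (h : Step (Proc.iencap I1 P1) a o) :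
    a = .pas 1 0 0 ∧ o = some (.iencap I1 (.atom (.act 1 1 0))) := by
  obtain ⟨o₀, h0, -, rfl⟩ := iencap_inv h
  rw [P1] at h0
  cases h0 with
  | seqT h1 => cases h1; exact ⟨rfl, rfl⟩
  | seqS h1 => cases h1

lemma X2_inv {a o} (h : Step (Proc.iencap I2 P2) a o) :
    a = .act 0 0 1 ∧ o = none := by
  obtain ⟨o₀, h0, -, rfl⟩ := iencap_inv h
  rw [P2] at h0
  cases h0
  exact ⟨rfl, rfl⟩

lemma X3_inv {a o} (h : Step (Proc.iencap I3 P3) a o) :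
    a = .pas 1 0 0 ∧ o = some (.iencap I3 (.atom (.act 1 2 0))) := by
  obtain ⟨o₀, h0, -, rfl⟩ := iencap_inv h
  rw [P3] at h0
  cases h0 with
  | seqT h1 => cases h1; exact ⟨rfl, rfl⟩
  | seqS h1 => cases h1

/-- Inversion for the parallel composition inside `C₂ ∥ C₃`. -/
lemma Binner_inv {a o} (h : Step (.par (.iencap I2 P2) (.iencap I3 P3)) a o) :
    (a = .act 0 0 1 ∧ o = some (.iencap I3 P3)) ∨
    (a = .pas 1 0 0 ∧
      o = some (.par (.iencap I2 P2) (.iencap I3 (.atom (.act 1 2 0))))) ∨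
    (a = .neu 0 0 1 ∧ o = some (.iencap I3 (.atom (.act 1 2 0)))) := by
  cases h with
  | parLT h2 => obtain ⟨rfl, -⟩ := X2_inv h2; exact .inl ⟨rfl, rfl⟩
  | parLS h2 => obtain ⟨-, h⟩ := X2_inv h2; cases h
  | parRT h2 => obtain ⟨-, h⟩ := X3_inv h2; cases h
  | parRS h2 =>
    obtain ⟨rfl, h⟩ := X3_inv h2
    cases h
    exact .inr (.inl ⟨rfl, rfl⟩)
  | parCTT hc ha hb => obtain ⟨-, h⟩ := X3_inv hb; cases h
  | parCTS hc ha hb =>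
    obtain ⟨rfl, -⟩ := X2_inv ha
    obtain ⟨rfl, h⟩ := X3_inv hb
    cases h
    cases hc
    exact .inr (.inr ⟨rfl, rfl⟩)
  | parCST hc ha hb => obtain ⟨-, h⟩ := X2_inv ha; cases h
  | parCSS hc ha hb => obtain ⟨-, h⟩ := X2_inv ha; cases h

/-- Inversion for `C₂ ∥ C₃` as a component behaviour. -/
lemma B_inv {a o}
    (h : Step (.iencap (I2 + I3) (.par (.iencap I2 P2) (.iencap I3 P3))) a o) :
    (a = .pas 1 0 0 ∧
      o = some (.iencap (I2 + I3)
        (.par (.iencap I2 P2) (.iencap I3 (.atom (.act 1 2 0)))))) ∨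
    (a = .neu 0 0 1 ∧
      o = some (.iencap (I2 + I3) (.iencap I3 (.atom (.act 1 2 0))))) := by
  obtain ⟨o₀, h0, hal, rfl⟩ := iencap_inv h
  rcases Binner_inv h0 with ⟨rfl, rfl⟩ | ⟨rfl, rfl⟩ | ⟨rfl, rfl⟩
  · exact absurd hal hI23not
  · exact .inl ⟨rfl, rfl⟩
  · exact .inr ⟨rfl, rfl⟩

/-- Inversion for the doubly encapsulated behaviour of `C₂ ∥ C₃`. -/
lemma B2_inv {a o}
    (h : Step (.iencap (I2 + I3)
      (.iencap (I2 + I3) (.par (.iencap I2 P2) (.iencap I3 P3)))) a o) :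
    (a = .pas 1 0 0 ∧
      o = some (.iencap (I2 + I3) (.iencap (I2 + I3)
        (.par (.iencap I2 P2) (.iencap I3 (.atom (.act 1 2 0))))))) ∨
    (a = .neu 0 0 1 ∧
      o = some (.iencap (I2 + I3) (.iencap (I2 + I3)
        (.iencap I3 (.atom (.act 1 2 0)))))) := by
  obtain ⟨o₀, h0, -, rfl⟩ := iencap_inv h
  rcases B_inv h0 with ⟨rfl, rfl⟩ | ⟨rfl, rfl⟩
  · exact .inl ⟨rfl, rfl⟩
  · exact .inr ⟨rfl, rfl⟩

/-- Process of `C₁ ∥ (C₂ ∥ C₃)`. -/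
def QR : Proc ℕ ℕ :=
  .iencap (I1 + (I2 + I3))
    (.par (.iencap I1 P1)
      (.iencap (I2 + I3)
        (.iencap (I2 + I3) (.par (.iencap I2 P2) (.iencap I3 P3)))))

/-- The unique state of `C₁ ∥ (C₂ ∥ C₃)` after the neutral step. -/
def QR' : Proc ℕ ℕ :=
  .iencap (I1 + (I2 + I3))
    (.par (.iencap I1 P1)
      (.iencap (I2 + I3) (.iencap (I2 + I3)
        (.iencap I3 (.atom (.act 1 2 0))))))

/-- Inversion: the only `neu 0 0 1` transition of `C₁ ∥ (C₂ ∥ C₃)` leads to `QR'`. -/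
lemma QR_neu_inv {o} (h : Step QR (.neu 0 0 1) o) : o = some QR' := by
  rw [QR] at h
  obtain ⟨o₀, h0, -, rfl⟩ := iencap_inv h
  cases h0 with
  | parLT h2 => obtain ⟨h, -⟩ := X1_inv h2; cases h
  | parLS h2 => obtain ⟨h, -⟩ := X1_inv h2; cases h
  | parRT h2 => rcases B2_inv h2 with ⟨h, -⟩ | ⟨-, h⟩ <;> cases h
  | parRS h2 =>
    rcases B2_inv h2 with ⟨h, -⟩ | ⟨-, h⟩
    · cases h
    · cases h; rfl
  | parCTT hc ha hb => obtain ⟨-, h⟩ := X1_inv ha; cases h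
  | parCTS hc ha hb => obtain ⟨-, h⟩ := X1_inv ha; cases h
  | parCST hc ha hb =>
    obtain ⟨rfl, -⟩ := X1_inv ha
    cases hc
    rcases B2_inv hb with ⟨h, -⟩ | ⟨h, -⟩ <;> cases h
  | parCSS hc ha hb =>
    obtain ⟨rfl, -⟩ := X1_inv ha
    cases hc
    rcases B2_inv hb with ⟨h, -⟩ | ⟨h, -⟩ <;> cases h

/-- `QR'` can never perform `act 1 1 0`. -/
lemma QR'_no_act {o} (h : Step QR' (.act 1 1 0) o) : False := by
  rw [QR'] at h
  obtain ⟨o₀, h0, -, -⟩ := iencap_inv h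
  cases h0 with
  | parLT h2 => obtain ⟨h, -⟩ := X1_inv h2; cases h
  | parLS h2 => obtain ⟨h, -⟩ := X1_inv h2; cases h
  | parRT h2 =>
    obtain ⟨o₁, h1, -, -⟩ := iencap_inv h2
    obtain ⟨o₂, h2', -, -⟩ := iencap_inv h1
    obtain ⟨o₃, h3', -, -⟩ := iencap_inv h2'
    cases h3'
  | parRS h2 =>
    obtain ⟨o₁, h1, -, -⟩ := iencap_inv h2
    obtain ⟨o₂, h2', -, -⟩ := iencap_inv h1
    obtain ⟨o₃, h3', -, -⟩ := iencap_inv h2'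
    cases h3'
  | parCTT hc _ _ => exact comm_no_act hc
  | parCTS hc _ _ => exact comm_no_act hc
  | parCST hc _ _ => exact comm_no_act hc
  | parCSS hc _ _ => exact comm_no_act hc

/-- Process of `(C₁ ∥ C₂) ∥ C₃`. -/
def PL : Proc ℕ ℕ :=
  .iencap ((I1 + I2) + I3)
    (.par (.iencap (I1 + I2)
        (.iencap (I1 + I2) (.par (.iencap I1 P1) (.iencap I2 P2))))
      (.iencap I3 P3))

/-- A state of `(C₁ ∥ C₂) ∥ C₃` after the neutral step. -/
def PL' : Proc ℕ ℕ :=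
  .iencap ((I1 + I2) + I3)
    (.par (.iencap (I1 + I2) (.iencap (I1 + I2)
        (.iencap I1 (.atom (.act 1 1 0)))))
      (.iencap I3 P3))

lemma PL_neu : Step PL (.neu 0 0 1) (some PL') := by
  have h1 : Step (Proc.iencap I1 P1) (.pas 1 0 0)
      (some (.iencap I1 (.atom (.act 1 1 0)))) := by
    exact Step.iencap (Step.seqT (Step.atom _)) hI1neg
  have h2 : Step (Proc.iencap I2 P2) (.act 0 0 1) none := by
    have := Step.iencap (I := I2) (Step.atom (Act.act 0 0 1)) hI2pos
    simpa [P2] using this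
  have hc : Comm (Act.pas 1 0 0) (Act.act 0 0 1) (Act.neu 0 0 1) := Comm.pa 0 1 0
  have h3 := Step.parCST hc h1 h2
  have h4 := Step.iencap (I := I1 + I2) h3 trivial
  have h4' := Step.iencap (I := I1 + I2) h4 trivial
  have h5 := Step.parLS (q := Proc.iencap I3 P3) h4'
  exact Step.iencap h5 trivial

lemma PL'_act : Step PL' (.act 1 1 0) (some (.iencap ((I1 + I2) + I3) (.iencap I3 P3))) := by
  have h1 : Step (Proc.iencap I1 (.atom (.act 1 1 0))) (.act 1 1 0) none := by
    have := Step.iencap (I := I1) (Step.atom (Act.act 1 1 0)) hI1pos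
    simpa using this
  have h2 : Step (Proc.iencap (I1 + I2) (.iencap I1 (.atom (.act 1 1 0)))) (.act 1 1 0) none := by
    have := Step.iencap (I := I1 + I2) h1 hI12pos
    simpa using this
  have h2' : Step (Proc.iencap (I1 + I2) (.iencap (I1 + I2)
      (.iencap I1 (.atom (.act 1 1 0))))) (.act 1 1 0) none := by
    have := Step.iencap (I := I1 + I2) h2 hI12pos
    simpa using this
  have h3 := Step.parLT (q := Proc.iencap I3 P3) h2'
  exact Step.iencap h3 hKpos

end NA

/-- Component composition is in general not associative: there exist process
components `C₁`, `C₂`, `C₃` such that `(C₁ ∥ C₂) ∥ C₃` is not bisimilar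
(hence not equal) to `C₁ ∥ (C₂ ∥ C₃)`. -/
theorem compose_not_associative :
    ∃ C₁ C₂ C₃ : Comp ℕ ℕ,
      ¬ CompBisim (compose (compose C₁ C₂) C₃) (compose C₁ (compose C₂ C₃)) := by
  refine ⟨(I1, P1), (I2, P2), (I3, P3), ?_⟩
  rintro ⟨-, R, ⟨hsym, hstep⟩, hR⟩
  have hR' : R PL QR := by
    simpa only [compose, PL, QR, P1, P2, P3] using hR
  obtain ⟨o', hQstep, hrel⟩ := hstep _ _ _ _ hR' PL_neu
  have ho' : o' = some QR' := QR_neu_inv hQstep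
  subst ho'
  have hrel' : R PL' QR' := hrel
  obtain ⟨o'', hQ'step, -⟩ := hstep _ _ _ _ hrel' PL'_act
  exact QR'_no_act hQ'step
end

section
/- Sufficient condition for associativity of component composition: if interfaces i, j, h are such that for every active interface element e, either mult_e(i+j+h) = 0, or one of mult_e(i), mult_e(j), mult_e(h) is 0, or sg(mult_e(i)) = sg(mult_e(j)) = sg(mult_e(h)), then the interface-compliant encapsulations compose associatively: for all processes x, y, z, ∂_{i+j+h}(∂_{i+j}(∂_i(x) ∥ ∂_j(y)) ∥ ∂_h(z)) = ∂_{i+j+h}(∂_i(x) ∥ ∂_{j+h}(∂_j(y) ∥ ∂_h(z))), where processes are finite transition systems and equality is bisimilarity. -/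
/-! ### Auxiliary development for `compose_assoc_condition` -/

section AssocAux

variable {L M : Type}

/-- Combination of optional residuals for parallel composition. -/
def parOpt : Option (Proc L M) → Option (Proc L M) → Option (Proc L M)
  | some p, some q => some (.par p q)
  | some p, none => some p
  | none, o => o

@[simp] lemma parOpt_none_right (o : Option (Proc L M)) : parOpt o none = o := by
  cases o <;> rfl

@[simp] lemma parOpt_none_left (o : Option (Proc L M)) : parOpt none o = o := rfl

lemma parOpt_eq_none {o1 o2 : Option (Proc L M)} :
    parOpt o1 o2 = none ↔ o1 = none ∧ o2 = none := by
  cases o1 <;> cases o2 <;> simp [parOpt]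

/-- Interface-compliant encapsulation on optional residuals. -/
def encOpt (I : IFace L M) (o : Option (Proc L M)) : Option (Proc L M) :=
  o.map (.iencap I)

@[simp] lemma encOpt_none (I : IFace L M) : encOpt I none = none := rfl
@[simp] lemma encOpt_some (I : IFace L M) (p : Proc L M) :
    encOpt I (some p) = some (.iencap I p) := rfl

lemma encOpt_eq_none {I : IFace L M} {o : Option (Proc L M)} :
    encOpt I o = none ↔ o = none := by cases o <;> simp [encOpt]

/-- Steps of an optional process. -/
def OStep (o : Option (Proc L M)) (a : Act L M) (o' : Option (Proc L M)) : Prop :=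
  ∃ p, o = some p ∧ Step p a o'

lemma ostep_encOpt {I : IFace L M} {o : Option (Proc L M)} {a : Act L M}
    {w : Option (Proc L M)} :
    OStep (encOpt I o) a w ↔ allowed I a ∧ ∃ w0, OStep o a w0 ∧ w = encOpt I w0 := by
  constructor
  · rintro ⟨p, hp, hs⟩
    cases o with
    | none => simp [encOpt] at hp
    | some q =>
      rw [encOpt_some, Option.some.injEq] at hp
      subst hp
      cases hs with
      | iencap hs' hall => exact ⟨hall, _, ⟨q, rfl, hs'⟩, rfl⟩
  · rintro ⟨hall, w0, ⟨p, hp, hs⟩, rfl⟩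
    subst hp
    exact ⟨_, rfl, .iencap hs hall⟩

lemma ostep_parOpt {o1 o2 : Option (Proc L M)} {a : Act L M} {w : Option (Proc L M)} :
    OStep (parOpt o1 o2) a w ↔
      (∃ w1, OStep o1 a w1 ∧ w = parOpt w1 o2) ∨
      (∃ w2, OStep o2 a w2 ∧ w = parOpt o1 w2) ∨
      (∃ b c w1 w2, Comm b c a ∧ OStep o1 b w1 ∧ OStep o2 c w2 ∧ w = parOpt w1 w2) := by
  constructor
  · rintro ⟨p, hp, hs⟩
    cases o1 with
    | none =>
      cases o2 with
      | none => simp [parOpt] at hp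
      | some q =>
        rw [parOpt_none_left, Option.some.injEq] at hp
        subst hp
        exact Or.inr (Or.inl ⟨w, ⟨q, rfl, hs⟩, rfl⟩)
    | some p1 =>
      cases o2 with
      | none =>
        rw [parOpt_none_right, Option.some.injEq] at hp
        subst hp
        exact Or.inl ⟨w, ⟨p1, rfl, hs⟩, by simp⟩
      | some p2 =>
        have hp' : p = Proc.par p1 p2 := by simpa [parOpt] using hp.symm
        subst hp'
        cases hs with
        | parLT h1 => exact Or.inl ⟨none, ⟨p1, rfl, h1⟩, rfl⟩
        | parLS h1 => exact Or.inl ⟨some _, ⟨p1, rfl, h1⟩, rfl⟩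
        | parRT h2 => exact Or.inr (Or.inl ⟨none, ⟨p2, rfl, h2⟩, rfl⟩)
        | parRS h2 => exact Or.inr (Or.inl ⟨some _, ⟨p2, rfl, h2⟩, rfl⟩)
        | parCTT hc h1 h2 =>
          exact Or.inr (Or.inr ⟨_, _, none, none, hc, ⟨p1, rfl, h1⟩, ⟨p2, rfl, h2⟩, rfl⟩)
        | parCTS hc h1 h2 =>
          exact Or.inr (Or.inr ⟨_, _, none, some _, hc, ⟨p1, rfl, h1⟩, ⟨p2, rfl, h2⟩, rfl⟩)
        | parCST hc h1 h2 =>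
          exact Or.inr (Or.inr ⟨_, _, some _, none, hc, ⟨p1, rfl, h1⟩, ⟨p2, rfl, h2⟩, rfl⟩)
        | parCSS hc h1 h2 =>
          exact Or.inr (Or.inr ⟨_, _, some _, some _, hc, ⟨p1, rfl, h1⟩, ⟨p2, rfl, h2⟩, rfl⟩)
  · rintro (⟨w1, ⟨p1, hp1, hs1⟩, rfl⟩ | ⟨w2, ⟨p2, hp2, hs2⟩, rfl⟩ |
      ⟨b, c, w1, w2, hc, ⟨p1, hp1, hs1⟩, ⟨p2, hp2, hs2⟩, rfl⟩)
    · subst hp1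
      cases o2 with
      | none => exact ⟨p1, rfl, by simpa using hs1⟩
      | some p2 =>
        cases w1 with
        | none => exact ⟨_, rfl, .parLT hs1⟩
        | some p1' => exact ⟨_, rfl, .parLS hs1⟩
    · subst hp2
      cases o1 with
      | none => exact ⟨p2, rfl, by simpa using hs2⟩
      | some p1 =>
        cases w2 with
        | none => exact ⟨_, rfl, .parRT hs2⟩
        | some p2' => exact ⟨_, rfl, .parRS hs2⟩
    · subst hp1; subst hp2
      cases w1 with
      | none =>
        cases w2 with
        | none => exact ⟨_, rfl, .parCTT hc hs1 hs2⟩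
        | some q' => exact ⟨_, rfl, .parCTS hc hs1 hs2⟩
      | some p' =>
        cases w2 with
        | none => exact ⟨_, rfl, .parCST hc hs1 hs2⟩
        | some q' => exact ⟨_, rfl, .parCSS hc hs1 hs2⟩

/-! ### Arithmetic lemmas about the interface condition -/

/-- The pointwise interface condition. -/
def HCnd (a b c : ℤ) : Prop :=
  a + b + c = 0 ∨ a = 0 ∨ b = 0 ∨ c = 0 ∨ (a.sign = b.sign ∧ b.sign = c.sign)

lemma sgn_pos {a b : ℤ} (hs : a.sign = b.sign) (ha : 0 < a) : 0 < b := by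
  have h1 := Int.sign_eq_one_iff_pos.mpr ha
  rw [hs] at h1
  exact Int.sign_eq_one_iff_pos.mp h1

lemma HCnd.neg {a b c : ℤ} (H : HCnd a b c) : HCnd (-a) (-b) (-c) := by
  rcases H with H | H | H | H | ⟨H1, H2⟩
  · exact Or.inl (by omega)
  · exact Or.inr (Or.inl (by omega))
  · exact Or.inr (Or.inr (Or.inl (by omega)))
  · exact Or.inr (Or.inr (Or.inr (Or.inl (by omega))))
  · exact Or.inr (Or.inr (Or.inr (Or.inr
      ⟨by rw [Int.sign_neg, Int.sign_neg, H1], by rw [Int.sign_neg, Int.sign_neg, H2]⟩)))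

lemma K1 {a b c : ℤ} (H : HCnd a b c) (h1 : 0 < a) (h2 : 0 < a + b + c) : 0 < a + b := by
  rcases H with H | H | H | H | ⟨H1, H2⟩ <;> try omega
  have := sgn_pos H1 h1; omega

lemma K2 {a b c : ℤ} (H : HCnd a b c) (h1 : 0 < b) (h2 : 0 < a + b) (h3 : 0 < a + b + c) :
    0 < b + c := by
  rcases H with H | H | H | H | ⟨H1, H2⟩ <;> try omega
  have := sgn_pos H2 h1; omega

lemma K3 {a b c : ℤ} (H : HCnd a b c) (h1 : 0 < b) (h2 : 0 < b + c) (h3 : 0 < a + b + c) :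
    0 < a + b := by
  rcases H with H | H | H | H | ⟨H1, H2⟩ <;> try omega
  have := sgn_pos H1.symm h1; omega

lemma K4 {a b c : ℤ} (H : HCnd a b c) (h1 : 0 < c) (h2 : 0 < a + b + c) : 0 < b + c := by
  rcases H with H | H | H | H | ⟨H1, H2⟩ <;> try omega
  have := sgn_pos H2.symm h1; omega

lemma K5 {a b c : ℤ} (H : HCnd a b c) (h1 : 0 < a) (h2 : b < 0) : b + c < 0 := by
  rcases H with H | H | H | H | ⟨H1, H2⟩ <;> try omega
  have := sgn_pos H1 h1; omega

lemma K6 {a b c : ℤ} (H : HCnd a b c) (h1 : 0 < a) (h2 : 0 < a + b) (h3 : c < 0) :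
    b + c < 0 := by
  rcases H with H | H | H | H | ⟨H1, H2⟩ <;> try omega
  have hb := sgn_pos H1 h1
  have := sgn_pos H2 hb; omega

lemma K7 {a b c : ℤ} (H : HCnd a b c) (h1 : 0 < a) (h2 : c < 0) (h3 : b + c < 0) :
    0 < a + b := by
  rcases H with H | H | H | H | ⟨H1, H2⟩ <;> try omega
  have hb := sgn_pos H1 h1
  have := sgn_pos H2 hb; omega

lemma K8 {a b c : ℤ} (H : HCnd a b c) (h1 : 0 < b) (h2 : c < 0) : 0 < a + b := by
  rcases H with H | H | H | H | ⟨H1, H2⟩ <;> try omega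
  have := sgn_pos H2 h1; omega

lemma K1' {a b c : ℤ} (H : HCnd a b c) (h1 : a < 0) (h2 : a + b + c < 0) : a + b < 0 := by
  have := K1 H.neg (by omega) (by omega); omega

lemma K2' {a b c : ℤ} (H : HCnd a b c) (h1 : b < 0) (h2 : a + b < 0) (h3 : a + b + c < 0) :
    b + c < 0 := by
  have := K2 H.neg (by omega) (by omega) (by omega); omega

lemma K3' {a b c : ℤ} (H : HCnd a b c) (h1 : b < 0) (h2 : b + c < 0) (h3 : a + b + c < 0) :
    a + b < 0 := by
  have := K3 H.neg (by omega) (by omega) (by omega); omega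

lemma K4' {a b c : ℤ} (H : HCnd a b c) (h1 : c < 0) (h2 : a + b + c < 0) : b + c < 0 := by
  have := K4 H.neg (by omega) (by omega); omega

lemma K5' {a b c : ℤ} (H : HCnd a b c) (h1 : a < 0) (h2 : 0 < b) : 0 < b + c := by
  have := K5 H.neg (by omega) (by omega); omega

lemma K6' {a b c : ℤ} (H : HCnd a b c) (h1 : a < 0) (h2 : a + b < 0) (h3 : 0 < c) :
    0 < b + c := by
  have := K6 H.neg (by omega) (by omega) (by omega); omega

lemma K7' {a b c : ℤ} (H : HCnd a b c) (h1 : a < 0) (h2 : 0 < c) (h3 : 0 < b + c) :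
    a + b < 0 := by
  have := K7 H.neg (by omega) (by omega) (by omega); omega

lemma K8' {a b c : ℤ} (H : HCnd a b c) (h1 : b < 0) (h2 : 0 < c) : a + b < 0 := by
  have := K8 H.neg (by omega) (by omega); omega

end AssocAux

section AssocStates

variable {L M : Type} (i j h : IFace L M)

/-- Left-associated composite state. -/
noncomputable def LState (ox oy oz : Option (Proc L M)) : Option (Proc L M) :=
  encOpt (i + j + h)
    (parOpt (encOpt (i + j) (parOpt (encOpt i ox) (encOpt j oy))) (encOpt h oz))

/-- Right-associated composite state. -/
noncomputable def RState (ox oy oz : Option (Proc L M)) : Option (Proc L M) :=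
  encOpt (i + j + h)
    (parOpt (encOpt i ox) (encOpt (j + h) (parOpt (encOpt j oy) (encOpt h oz))))

lemma LState_eq_none {ox oy oz : Option (Proc L M)} :
    LState i j h ox oy oz = none ↔ ox = none ∧ oy = none ∧ oz = none := by
  simp [LState, encOpt_eq_none, parOpt_eq_none, and_assoc]

lemma RState_eq_none {ox oy oz : Option (Proc L M)} :
    RState i j h ox oy oz = none ↔ ox = none ∧ oy = none ∧ oz = none := by
  simp [RState, encOpt_eq_none, parOpt_eq_none, and_assoc]

/-! #### Constructors for `LState` steps -/

lemma LState_moveX {a : Act L M} {ox ox' oy oz : Option (Proc L M)}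
    (hK : allowed (i + j + h) a) (hJ : allowed (i + j) a) (hi : allowed i a)
    (hx : OStep ox a ox') : OStep (LState i j h ox oy oz) a (LState i j h ox' oy oz) := by
  unfold LState
  exact ostep_encOpt.mpr ⟨hK, _, ostep_parOpt.mpr (Or.inl ⟨_,
    ostep_encOpt.mpr ⟨hJ, _, ostep_parOpt.mpr (Or.inl ⟨_,
      ostep_encOpt.mpr ⟨hi, _, hx, rfl⟩, rfl⟩), rfl⟩, rfl⟩), rfl⟩

lemma LState_moveY {a : Act L M} {ox oy oy' oz : Option (Proc L M)}
    (hK : allowed (i + j + h) a) (hJ : allowed (i + j) a) (hj : allowed j a)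
    (hy : OStep oy a oy') : OStep (LState i j h ox oy oz) a (LState i j h ox oy' oz) := by
  unfold LState
  exact ostep_encOpt.mpr ⟨hK, _, ostep_parOpt.mpr (Or.inl ⟨_,
    ostep_encOpt.mpr ⟨hJ, _, ostep_parOpt.mpr (Or.inr (Or.inl ⟨_,
      ostep_encOpt.mpr ⟨hj, _, hy, rfl⟩, rfl⟩)), rfl⟩, rfl⟩), rfl⟩

lemma LState_moveZ {a : Act L M} {ox oy oz oz' : Option (Proc L M)}
    (hK : allowed (i + j + h) a) (hh : allowed h a)
    (hz : OStep oz a oz') : OStep (LState i j h ox oy oz) a (LState i j h ox oy oz') := by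
  unfold LState
  exact ostep_encOpt.mpr ⟨hK, _, ostep_parOpt.mpr (Or.inr (Or.inl ⟨_,
    ostep_encOpt.mpr ⟨hh, _, hz, rfl⟩, rfl⟩)), rfl⟩

lemma LState_commXY {a b c : Act L M} {ox ox' oy oy' oz : Option (Proc L M)}
    (hcm : Comm b c a) (hK : allowed (i + j + h) a) (hJ : allowed (i + j) a)
    (hib : allowed i b) (hjc : allowed j c)
    (hx : OStep ox b ox') (hy : OStep oy c oy') :
    OStep (LState i j h ox oy oz) a (LState i j h ox' oy' oz) := by
  unfold LState
  exact ostep_encOpt.mpr ⟨hK, _, ostep_parOpt.mpr (Or.inl ⟨_,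
    ostep_encOpt.mpr ⟨hJ, _, ostep_parOpt.mpr (Or.inr (Or.inr ⟨b, c, _, _, hcm,
      ostep_encOpt.mpr ⟨hib, _, hx, rfl⟩,
      ostep_encOpt.mpr ⟨hjc, _, hy, rfl⟩, rfl⟩)), rfl⟩, rfl⟩), rfl⟩

lemma LState_commXZ {a b c : Act L M} {ox ox' oy oz oz' : Option (Proc L M)}
    (hcm : Comm b c a) (hK : allowed (i + j + h) a) (hJb : allowed (i + j) b)
    (hib : allowed i b) (hhc : allowed h c)
    (hx : OStep ox b ox') (hz : OStep oz c oz') :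
    OStep (LState i j h ox oy oz) a (LState i j h ox' oy oz') := by
  unfold LState
  exact ostep_encOpt.mpr ⟨hK, _, ostep_parOpt.mpr (Or.inr (Or.inr ⟨b, c, _, _, hcm,
    ostep_encOpt.mpr ⟨hJb, _, ostep_parOpt.mpr (Or.inl ⟨_,
      ostep_encOpt.mpr ⟨hib, _, hx, rfl⟩, rfl⟩), rfl⟩,
    ostep_encOpt.mpr ⟨hhc, _, hz, rfl⟩, rfl⟩)), rfl⟩

lemma LState_commYZ {a b c : Act L M} {ox oy oy' oz oz' : Option (Proc L M)}
    (hcm : Comm b c a) (hK : allowed (i + j + h) a) (hJb : allowed (i + j) b)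
    (hjb : allowed j b) (hhc : allowed h c)
    (hy : OStep oy b oy') (hz : OStep oz c oz') :
    OStep (LState i j h ox oy oz) a (LState i j h ox oy' oz') := by
  unfold LState
  exact ostep_encOpt.mpr ⟨hK, _, ostep_parOpt.mpr (Or.inr (Or.inr ⟨b, c, _, _, hcm,
    ostep_encOpt.mpr ⟨hJb, _, ostep_parOpt.mpr (Or.inr (Or.inl ⟨_,
      ostep_encOpt.mpr ⟨hjb, _, hy, rfl⟩, rfl⟩)), rfl⟩,
    ostep_encOpt.mpr ⟨hhc, _, hz, rfl⟩, rfl⟩)), rfl⟩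

/-! #### Constructors for `RState` steps -/

lemma RState_moveX {a : Act L M} {ox ox' oy oz : Option (Proc L M)}
    (hK : allowed (i + j + h) a) (hi : allowed i a)
    (hx : OStep ox a ox') : OStep (RState i j h ox oy oz) a (RState i j h ox' oy oz) := by
  unfold RState
  exact ostep_encOpt.mpr ⟨hK, _, ostep_parOpt.mpr (Or.inl ⟨_,
    ostep_encOpt.mpr ⟨hi, _, hx, rfl⟩, rfl⟩), rfl⟩

lemma RState_moveY {a : Act L M} {ox oy oy' oz : Option (Proc L M)}
    (hK : allowed (i + j + h) a) (hJH : allowed (j + h) a) (hj : allowed j a)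
    (hy : OStep oy a oy') : OStep (RState i j h ox oy oz) a (RState i j h ox oy' oz) := by
  unfold RState
  exact ostep_encOpt.mpr ⟨hK, _, ostep_parOpt.mpr (Or.inr (Or.inl ⟨_,
    ostep_encOpt.mpr ⟨hJH, _, ostep_parOpt.mpr (Or.inl ⟨_,
      ostep_encOpt.mpr ⟨hj, _, hy, rfl⟩, rfl⟩), rfl⟩, rfl⟩)), rfl⟩

lemma RState_moveZ {a : Act L M} {ox oy oz oz' : Option (Proc L M)}
    (hK : allowed (i + j + h) a) (hJH : allowed (j + h) a) (hh : allowed h a)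
    (hz : OStep oz a oz') : OStep (RState i j h ox oy oz) a (RState i j h ox oy oz') := by
  unfold RState
  exact ostep_encOpt.mpr ⟨hK, _, ostep_parOpt.mpr (Or.inr (Or.inl ⟨_,
    ostep_encOpt.mpr ⟨hJH, _, ostep_parOpt.mpr (Or.inr (Or.inl ⟨_,
      ostep_encOpt.mpr ⟨hh, _, hz, rfl⟩, rfl⟩)), rfl⟩, rfl⟩)), rfl⟩

lemma RState_commXY {a b c : Act L M} {ox ox' oy oy' oz : Option (Proc L M)}
    (hcm : Comm b c a) (hK : allowed (i + j + h) a) (hib : allowed i b)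
    (hJHc : allowed (j + h) c) (hjc : allowed j c)
    (hx : OStep ox b ox') (hy : OStep oy c oy') :
    OStep (RState i j h ox oy oz) a (RState i j h ox' oy' oz) := by
  unfold RState
  exact ostep_encOpt.mpr ⟨hK, _, ostep_parOpt.mpr (Or.inr (Or.inr ⟨b, c, _, _, hcm,
    ostep_encOpt.mpr ⟨hib, _, hx, rfl⟩,
    ostep_encOpt.mpr ⟨hJHc, _, ostep_parOpt.mpr (Or.inl ⟨_,
      ostep_encOpt.mpr ⟨hjc, _, hy, rfl⟩, rfl⟩), rfl⟩, rfl⟩)), rfl⟩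

lemma RState_commXZ {a b c : Act L M} {ox ox' oy oz oz' : Option (Proc L M)}
    (hcm : Comm b c a) (hK : allowed (i + j + h) a) (hib : allowed i b)
    (hJHc : allowed (j + h) c) (hhc : allowed h c)
    (hx : OStep ox b ox') (hz : OStep oz c oz') :
    OStep (RState i j h ox oy oz) a (RState i j h ox' oy oz') := by
  unfold RState
  exact ostep_encOpt.mpr ⟨hK, _, ostep_parOpt.mpr (Or.inr (Or.inr ⟨b, c, _, _, hcm,
    ostep_encOpt.mpr ⟨hib, _, hx, rfl⟩,
    ostep_encOpt.mpr ⟨hJHc, _, ostep_parOpt.mpr (Or.inr (Or.inl ⟨_,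
      ostep_encOpt.mpr ⟨hhc, _, hz, rfl⟩, rfl⟩)), rfl⟩, rfl⟩)), rfl⟩

lemma RState_commYZ {a b c : Act L M} {ox oy oy' oz oz' : Option (Proc L M)}
    (hcm : Comm b c a) (hK : allowed (i + j + h) a) (hJHa : allowed (j + h) a)
    (hjb : allowed j b) (hhc : allowed h c)
    (hy : OStep oy b oy') (hz : OStep oz c oz') :
    OStep (RState i j h ox oy oz) a (RState i j h ox oy' oz') := by
  unfold RState
  exact ostep_encOpt.mpr ⟨hK, _, ostep_parOpt.mpr (Or.inr (Or.inl ⟨_,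
    ostep_encOpt.mpr ⟨hJHa, _, ostep_parOpt.mpr (Or.inr (Or.inr ⟨b, c, _, _, hcm,
      ostep_encOpt.mpr ⟨hjb, _, hy, rfl⟩,
      ostep_encOpt.mpr ⟨hhc, _, hz, rfl⟩, rfl⟩)), rfl⟩, rfl⟩)), rfl⟩

end AssocStates

section AssocMain

variable {L M : Type} (i j h : IFace L M)

lemma LState_cases {ox oy oz : Option (Proc L M)} {a : Act L M} {w : Option (Proc L M)}
    (hs : OStep (LState i j h ox oy oz) a w) :
    allowed (i + j + h) a ∧
    ((allowed (i + j) a ∧ allowed i a ∧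
        ∃ ox', OStep ox a ox' ∧ w = LState i j h ox' oy oz) ∨
     (allowed (i + j) a ∧ allowed j a ∧
        ∃ oy', OStep oy a oy' ∧ w = LState i j h ox oy' oz) ∨
     (allowed h a ∧ ∃ oz', OStep oz a oz' ∧ w = LState i j h ox oy oz') ∨
     (∃ b c ox' oy', Comm b c a ∧ allowed i b ∧ allowed j c ∧
        OStep ox b ox' ∧ OStep oy c oy' ∧ w = LState i j h ox' oy' oz) ∨
     (∃ b c ox' oz', Comm b c a ∧ allowed (i + j) b ∧ allowed i b ∧ allowed h c ∧
        OStep ox b ox' ∧ OStep oz c oz' ∧ w = LState i j h ox' oy oz') ∨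
     (∃ b c oy' oz', Comm b c a ∧ allowed (i + j) b ∧ allowed j b ∧ allowed h c ∧
        OStep oy b oy' ∧ OStep oz c oz' ∧ w = LState i j h ox oy' oz')) := by
  unfold LState at hs
  rw [ostep_encOpt] at hs
  obtain ⟨hK, w0, hs0, rfl⟩ := hs
  refine ⟨hK, ?_⟩
  rw [ostep_parOpt] at hs0
  rcases hs0 with ⟨w1, hs1, rfl⟩ | ⟨w2, hs2, rfl⟩ | ⟨b, c, w1, w2, hcm, hs1, hs2, rfl⟩
  · rw [ostep_encOpt] at hs1
    obtain ⟨hJ, w1', hs1', rfl⟩ := hs1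
    rw [ostep_parOpt] at hs1'
    rcases hs1' with ⟨wx, hsx, rfl⟩ | ⟨wy, hsy, rfl⟩ | ⟨b, c, wx, wy, hcm, hsx, hsy, rfl⟩
    · rw [ostep_encOpt] at hsx
      obtain ⟨hia, ox', hx, rfl⟩ := hsx
      exact Or.inl ⟨hJ, hia, ox', hx, rfl⟩
    · rw [ostep_encOpt] at hsy
      obtain ⟨hja, oy', hy, rfl⟩ := hsy
      exact Or.inr (Or.inl ⟨hJ, hja, oy', hy, rfl⟩)
    · rw [ostep_encOpt] at hsx hsy
      obtain ⟨hib, ox', hx, rfl⟩ := hsx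
      obtain ⟨hjc, oy', hy, rfl⟩ := hsy
      exact Or.inr (Or.inr (Or.inr (Or.inl ⟨b, c, ox', oy', hcm, hib, hjc, hx, hy, rfl⟩)))
  · rw [ostep_encOpt] at hs2
    obtain ⟨hh, oz', hz, rfl⟩ := hs2
    exact Or.inr (Or.inr (Or.inl ⟨hh, oz', hz, rfl⟩))
  · rw [ostep_encOpt] at hs1 hs2
    obtain ⟨hJb, w1', hs1', rfl⟩ := hs1
    obtain ⟨hhc, oz', hz, rfl⟩ := hs2
    rw [ostep_parOpt] at hs1'
    rcases hs1' with ⟨wx, hsx, rfl⟩ | ⟨wy, hsy, rfl⟩ | ⟨b', c', wx, wy, hcm', hsx, hsy, rfl⟩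
    · rw [ostep_encOpt] at hsx
      obtain ⟨hib, ox', hx, rfl⟩ := hsx
      exact Or.inr (Or.inr (Or.inr (Or.inr (Or.inl
        ⟨b, c, ox', oz', hcm, hJb, hib, hhc, hx, hz, rfl⟩))))
    · rw [ostep_encOpt] at hsy
      obtain ⟨hjb, oy', hy, rfl⟩ := hsy
      exact Or.inr (Or.inr (Or.inr (Or.inr (Or.inr
        ⟨b, c, oy', oz', hcm, hJb, hjb, hhc, hy, hz, rfl⟩))))
    · cases hcm' <;> cases hcm

lemma RState_cases {ox oy oz : Option (Proc L M)} {a : Act L M} {w : Option (Proc L M)}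
    (hs : OStep (RState i j h ox oy oz) a w) :
    allowed (i + j + h) a ∧
    ((allowed i a ∧ ∃ ox', OStep ox a ox' ∧ w = RState i j h ox' oy oz) ∨
     (allowed (j + h) a ∧ allowed j a ∧
        ∃ oy', OStep oy a oy' ∧ w = RState i j h ox oy' oz) ∨
     (allowed (j + h) a ∧ allowed h a ∧
        ∃ oz', OStep oz a oz' ∧ w = RState i j h ox oy oz') ∨
     (∃ b c ox' oy', Comm b c a ∧ allowed i b ∧ allowed (j + h) c ∧ allowed j c ∧
        OStep ox b ox' ∧ OStep oy c oy' ∧ w = RState i j h ox' oy' oz) ∨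
     (∃ b c ox' oz', Comm b c a ∧ allowed i b ∧ allowed (j + h) c ∧ allowed h c ∧
        OStep ox b ox' ∧ OStep oz c oz' ∧ w = RState i j h ox' oy oz') ∨
     (∃ b c oy' oz', Comm b c a ∧ allowed (j + h) a ∧ allowed j b ∧ allowed h c ∧
        OStep oy b oy' ∧ OStep oz c oz' ∧ w = RState i j h ox oy' oz')) := by
  unfold RState at hs
  rw [ostep_encOpt] at hs
  obtain ⟨hK, w0, hs0, rfl⟩ := hs
  refine ⟨hK, ?_⟩
  rw [ostep_parOpt] at hs0
  rcases hs0 with ⟨w1, hs1, rfl⟩ | ⟨w2, hs2, rfl⟩ | ⟨b, c, w1, w2, hcm, hs1, hs2, rfl⟩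
  · rw [ostep_encOpt] at hs1
    obtain ⟨hia, ox', hx, rfl⟩ := hs1
    exact Or.inl ⟨hia, ox', hx, rfl⟩
  · rw [ostep_encOpt] at hs2
    obtain ⟨hJH, w2', hs2', rfl⟩ := hs2
    rw [ostep_parOpt] at hs2'
    rcases hs2' with ⟨wy, hsy, rfl⟩ | ⟨wz, hsz, rfl⟩ | ⟨b, c, wy, wz, hcm, hsy, hsz, rfl⟩
    · rw [ostep_encOpt] at hsy
      obtain ⟨hja, oy', hy, rfl⟩ := hsy
      exact Or.inr (Or.inl ⟨hJH, hja, oy', hy, rfl⟩)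
    · rw [ostep_encOpt] at hsz
      obtain ⟨hha, oz', hz, rfl⟩ := hsz
      exact Or.inr (Or.inr (Or.inl ⟨hJH, hha, oz', hz, rfl⟩))
    · rw [ostep_encOpt] at hsy hsz
      obtain ⟨hjb, oy', hy, rfl⟩ := hsy
      obtain ⟨hhc, oz', hz, rfl⟩ := hsz
      exact Or.inr (Or.inr (Or.inr (Or.inr (Or.inr
        ⟨b, c, oy', oz', hcm, hJH, hjb, hhc, hy, hz, rfl⟩))))
  · rw [ostep_encOpt] at hs1 hs2
    obtain ⟨hib, ox', hx, rfl⟩ := hs1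
    obtain ⟨hJHc, w2', hs2', rfl⟩ := hs2
    rw [ostep_parOpt] at hs2'
    rcases hs2' with ⟨wy, hsy, rfl⟩ | ⟨wz, hsz, rfl⟩ | ⟨b', c', wy, wz, hcm', hsy, hsz, rfl⟩
    · rw [ostep_encOpt] at hsy
      obtain ⟨hjc, oy', hy, rfl⟩ := hsy
      exact Or.inr (Or.inr (Or.inr (Or.inl
        ⟨b, c, ox', oy', hcm, hib, hJHc, hjc, hx, hy, rfl⟩)))
    · rw [ostep_encOpt] at hsz
      obtain ⟨hhc, oz', hz, rfl⟩ := hsz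
      exact Or.inr (Or.inr (Or.inr (Or.inr (Or.inl
        ⟨b, c, ox', oz', hcm, hib, hJHc, hhc, hx, hz, rfl⟩))))
    · cases hcm' <;> cases hcm

end AssocMain

section AssocTransfer

variable {L M : Type} (i j h : IFace L M)

lemma LtoR (hc : ∀ e : L × M × L, HCnd (i e) (j e) (h e))
    {ox oy oz : Option (Proc L M)} {a : Act L M} {w : Option (Proc L M)}
    (hs : OStep (LState i j h ox oy oz) a w) :
    ∃ ox' oy' oz', w = LState i j h ox' oy' oz' ∧
      OStep (RState i j h ox oy oz) a (RState i j h ox' oy' oz') := by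
  obtain ⟨hK, hcases⟩ := LState_cases i j h hs
  rcases hcases with ⟨hJ, hia, ox', hx, rfl⟩ | ⟨hJ, hja, oy', hy, rfl⟩ |
    ⟨hha, oz', hz, rfl⟩ |
    ⟨b, c, ox', oy', hcm, hib, hjc, hx, hy, rfl⟩ |
    ⟨b, c, ox', oz', hcm, hJb, hib, hhc, hx, hz, rfl⟩ |
    ⟨b, c, oy', oz', hcm, hJb, hjb, hhc, hy, hz, rfl⟩
  · exact ⟨ox', oy, oz, rfl, RState_moveX i j h hK hia hx⟩
  · refine ⟨ox, oy', oz, rfl, RState_moveY i j h hK ?_ hja hy⟩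
    cases a with
    | act f m g =>
      simp only [allowed, Finsupp.add_apply] at hK hJ hja ⊢
      exact K2 (hc (f, m, g)) hja hJ hK
    | pas f m g =>
      simp only [allowed, Finsupp.add_apply] at hK hJ hja ⊢
      exact K2' (hc (g, m, f)) hja hJ hK
    | neu f m g => exact trivial
  · refine ⟨ox, oy, oz', rfl, RState_moveZ i j h hK ?_ hha hz⟩
    cases a with
    | act f m g =>
      simp only [allowed, Finsupp.add_apply] at hK hha ⊢
      exact K4 (hc (f, m, g)) hha hK
    | pas f m g =>
      simp only [allowed, Finsupp.add_apply] at hK hha ⊢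
      exact K4' (hc (g, m, f)) hha hK
    | neu f m g => exact trivial
  · refine ⟨ox', oy', oz, rfl, RState_commXY i j h hcm hK hib ?_ hjc hx hy⟩
    cases hcm with
    | ap f g m =>
      simp only [allowed, Finsupp.add_apply] at hib hjc ⊢
      exact K5 (hc (f, m, g)) hib hjc
    | pa f g m =>
      simp only [allowed, Finsupp.add_apply] at hib hjc ⊢
      exact K5' (hc (f, m, g)) hib hjc
  · refine ⟨ox', oy, oz', rfl, RState_commXZ i j h hcm hK hib ?_ hhc hx hz⟩
    cases hcm with
    | ap f g m =>
      simp only [allowed, Finsupp.add_apply] at hib hJb hhc ⊢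
      exact K6 (hc (f, m, g)) hib hJb hhc
    | pa f g m =>
      simp only [allowed, Finsupp.add_apply] at hib hJb hhc ⊢
      exact K6' (hc (f, m, g)) hib hJb hhc
  · refine ⟨ox, oy', oz', rfl, RState_commYZ i j h hcm hK ?_ hjb hhc hy hz⟩
    cases hcm <;> exact trivial

lemma RtoL (hc : ∀ e : L × M × L, HCnd (i e) (j e) (h e))
    {ox oy oz : Option (Proc L M)} {a : Act L M} {w : Option (Proc L M)}
    (hs : OStep (RState i j h ox oy oz) a w) :
    ∃ ox' oy' oz', w = RState i j h ox' oy' oz' ∧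
      OStep (LState i j h ox oy oz) a (LState i j h ox' oy' oz') := by
  obtain ⟨hK, hcases⟩ := RState_cases i j h hs
  rcases hcases with ⟨hia, ox', hx, rfl⟩ | ⟨hJH, hja, oy', hy, rfl⟩ |
    ⟨hJH, hha, oz', hz, rfl⟩ |
    ⟨b, c, ox', oy', hcm, hib, hJHc, hjc, hx, hy, rfl⟩ |
    ⟨b, c, ox', oz', hcm, hib, hJHc, hhc, hx, hz, rfl⟩ |
    ⟨b, c, oy', oz', hcm, hJHa, hjb, hhc, hy, hz, rfl⟩
  · refine ⟨ox', oy, oz, rfl, LState_moveX i j h hK ?_ hia hx⟩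
    cases a with
    | act f m g =>
      simp only [allowed, Finsupp.add_apply] at hK hia ⊢
      exact K1 (hc (f, m, g)) hia hK
    | pas f m g =>
      simp only [allowed, Finsupp.add_apply] at hK hia ⊢
      exact K1' (hc (g, m, f)) hia hK
    | neu f m g => exact trivial
  · refine ⟨ox, oy', oz, rfl, LState_moveY i j h hK ?_ hja hy⟩
    cases a with
    | act f m g =>
      simp only [allowed, Finsupp.add_apply] at hK hJH hja ⊢
      exact K3 (hc (f, m, g)) hja hJH hK
    | pas f m g =>
      simp only [allowed, Finsupp.add_apply] at hK hJH hja ⊢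
      exact K3' (hc (g, m, f)) hja hJH hK
    | neu f m g => exact trivial
  · exact ⟨ox, oy, oz', rfl, LState_moveZ i j h hK hha hz⟩
  · refine ⟨ox', oy', oz, rfl, LState_commXY i j h hcm hK ?_ hib hjc hx hy⟩
    cases hcm <;> exact trivial
  · refine ⟨ox', oy, oz', rfl, LState_commXZ i j h hcm hK ?_ hib hhc hx hz⟩
    cases hcm with
    | ap f g m =>
      simp only [allowed, Finsupp.add_apply] at hib hJHc hhc ⊢
      exact K7 (hc (f, m, g)) hib hhc hJHc
    | pa f g m =>
      simp only [allowed, Finsupp.add_apply] at hib hJHc hhc ⊢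
      exact K7' (hc (f, m, g)) hib hhc hJHc
  · refine ⟨ox, oy', oz', rfl, LState_commYZ i j h hcm hK ?_ hjb hhc hy hz⟩
    cases hcm with
    | ap f g m =>
      simp only [allowed, Finsupp.add_apply] at hjb hhc ⊢
      exact K8 (hc (f, m, g)) hjb hhc
    | pa f g m =>
      simp only [allowed, Finsupp.add_apply] at hjb hhc ⊢
      exact K8' (hc (f, m, g)) hjb hhc

lemma optRel_of_none_iff {α : Type} {R : α → α → Prop} {o1 o2 : Option α}
    (hn : o1 = none ↔ o2 = none)
    (hs : ∀ p' q', o1 = some p' → o2 = some q' → R p' q') : OptRel R o1 o2 := by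
  cases o1 with
  | none =>
    cases o2 with
    | none => trivial
    | some q => exact absurd (hn.mp rfl) (by simp)
  | some p =>
    cases o2 with
    | none => exact absurd (hn.mpr rfl) (by simp)
    | some q => exact hs _ _ rfl rfl

end AssocTransfer

/-- Sufficient condition for associativity of component composition: if for
every active interface element `e` either `mult_e(i+j+h) = 0`, or one of
`mult_e(i)`, `mult_e(j)`, `mult_e(h)` is `0`, or the signa of the three
multiplicities agree, then the interface-compliant encapsulations compose
associatively up to bisimilarity. -/
theorem compose_assoc_condition (L M : Type) (i j h : IFace L M)
    (hcond : ∀ e : L × M × L,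
      (i + j + h) e = 0 ∨ i e = 0 ∨ j e = 0 ∨ h e = 0 ∨
      (Int.sign (i e) = Int.sign (j e) ∧ Int.sign (j e) = Int.sign (h e))) :
    ∀ x y z : Proc L M,
      Bisim
        (Proc.iencap (i + j + h)
          (Proc.par (Proc.iencap (i + j)
              (Proc.par (Proc.iencap i x) (Proc.iencap j y)))
            (Proc.iencap h z)))
        (Proc.iencap (i + j + h)
          (Proc.par (Proc.iencap i x)
            (Proc.iencap (j + h)
              (Proc.par (Proc.iencap j y) (Proc.iencap h z))))) := by
  intro x y z
  have hc : ∀ e : L × M × L, HCnd (i e) (j e) (h e) := by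
    intro e
    have h0 := hcond e
    simpa only [HCnd, Finsupp.add_apply] using h0
  refine ⟨fun p q =>
      (∃ ox oy oz, some p = LState i j h ox oy oz ∧ some q = RState i j h ox oy oz) ∨
      (∃ ox oy oz, some q = LState i j h ox oy oz ∧ some p = RState i j h ox oy oz),
    ⟨fun p q hr => hr.symm, ?_⟩, Or.inl ⟨some x, some y, some z, rfl, rfl⟩⟩
  rintro p q a o (⟨ox, oy, oz, hp, hq⟩ | ⟨ox, oy, oz, hq, hp⟩) hstep
  · obtain ⟨ox', oy', oz', rfl, hR⟩ := LtoR i j h hc ⟨p, hp.symm, hstep⟩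
    obtain ⟨q0, hq0, hstep'⟩ := hR
    injection hq.trans hq0 with hqq
    subst hqq
    refine ⟨_, hstep', ?_⟩
    refine optRel_of_none_iff (by rw [LState_eq_none, RState_eq_none]) ?_
    intro p' q' hp' hq'
    exact Or.inl ⟨ox', oy', oz', hp'.symm, hq'.symm⟩
  · obtain ⟨ox', oy', oz', rfl, hR⟩ := RtoL i j h hc ⟨p, hp.symm, hstep⟩
    obtain ⟨q0, hq0, hstep'⟩ := hR
    injection hq.trans hq0 with hqq
    subst hqq
    refine ⟨_, hstep', ?_⟩
    refine optRel_of_none_iff (by rw [RState_eq_none, LState_eq_none]) ?_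
    intro p' q' hp' hq'
    exact Or.inr ⟨ox', oy', oz', hq'.symm, hp'.symm⟩
end

section
/- Bisimilarity of finitely branching labelled transition systems is a congruence with respect to alternative composition, sequential composition, parallel composition with synchronization of matching active/passive actions, left merge, communication merge, encapsulation ∂_H, and interface-compliant encapsulation ∂_I. -/
section Helpers
variable {L M : Type}

lemma bisim_symm {p q : Proc L M} (h : Bisim p q) : Bisim q p := by
  obtain ⟨R, hR, hpq⟩ := h; exact ⟨R, hR, hR.1 _ _ hpq⟩

lemma optRel_mono {R R' : Proc L M → Proc L M → Prop} (h : ∀ x y, R x y → R' x y)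
    {o o' : Option (Proc L M)} (hr : OptRel R o o') : OptRel R' o o' := by
  cases o <;> cases o' <;> simp only [OptRel] at hr ⊢
  exact h _ _ hr

lemma bisim_step {p q : Proc L M} {a o} (h : Bisim p q) (hs : Step p a o) :
    ∃ o', Step q a o' ∧ OptRel Bisim o o' := by
  obtain ⟨R, hR, hpq⟩ := h
  obtain ⟨o', ho', hrel⟩ := hR.2 _ _ _ _ hpq hs
  refine ⟨o', ho', optRel_mono (fun x y hxy => ⟨R, hR, hxy⟩) hrel⟩

lemma bisim_step_none {p q : Proc L M} {a} (h : Bisim p q) (hs : Step p a none) :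
    Step q a none := by
  obtain ⟨o', ho', hrel⟩ := bisim_step h hs
  cases o' with
  | none => exact ho'
  | some x => simp only [OptRel] at hrel

lemma bisim_step_some {p q : Proc L M} {a p₁} (h : Bisim p q) (hs : Step p a (some p₁)) :
    ∃ q₁, Step q a (some q₁) ∧ Bisim p₁ q₁ := by
  obtain ⟨o', ho', hrel⟩ := bisim_step h hs
  cases o' with
  | none => simp only [OptRel] at hrel
  | some q₁ => exact ⟨q₁, ho', hrel⟩

/-- Relation used for parallel composition. -/
def ParRel : Proc L M → Proc L M → Prop := fun x y =>
  Bisim x y ∨ ∃ p p' q q', x = .par p q ∧ y = .par p' q' ∧ Bisim p p' ∧ Bisim q q'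

lemma parRel_isBisim : IsBisim (ParRel (L := L) (M := M)) := by
  constructor
  · rintro x y (h | ⟨p, p', q, q', rfl, rfl, hp, hq⟩)
    · exact .inl (bisim_symm h)
    · exact .inr ⟨p', p, q', q, rfl, rfl, bisim_symm hp, bisim_symm hq⟩
  · rintro x y a o (h | ⟨p, p', q, q', rfl, rfl, hp, hq⟩) hs
    · obtain ⟨o', ho', hrel⟩ := bisim_step h hs
      exact ⟨o', ho', optRel_mono (fun _ _ h => .inl h) hrel⟩
    · cases hs with
      | parLT h1 => exact ⟨_, .parLT (bisim_step_none hp h1), .inl hq⟩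
      | parLS h1 =>
        obtain ⟨p₁', h1', hb⟩ := bisim_step_some hp h1
        exact ⟨_, .parLS h1', .inr ⟨_, _, _, _, rfl, rfl, hb, hq⟩⟩
      | parRT h1 => exact ⟨_, .parRT (bisim_step_none hq h1), .inl hp⟩
      | parRS h1 =>
        obtain ⟨q₁', h1', hb⟩ := bisim_step_some hq h1
        exact ⟨_, .parRS h1', .inr ⟨_, _, _, _, rfl, rfl, hp, hb⟩⟩
      | parCTT hc h1 h2 =>
        exact ⟨_, .parCTT hc (bisim_step_none hp h1) (bisim_step_none hq h2), trivial⟩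
      | parCTS hc h1 h2 =>
        obtain ⟨q₁', h2', hb⟩ := bisim_step_some hq h2
        exact ⟨_, .parCTS hc (bisim_step_none hp h1) h2', .inl hb⟩
      | parCST hc h1 h2 =>
        obtain ⟨p₁', h1', hb⟩ := bisim_step_some hp h1
        exact ⟨_, .parCST hc h1' (bisim_step_none hq h2), .inl hb⟩
      | parCSS hc h1 h2 =>
        obtain ⟨p₁', h1', hb1⟩ := bisim_step_some hp h1
        obtain ⟨q₁', h2', hb2⟩ := bisim_step_some hq h2
        exact ⟨_, .parCSS hc h1' h2', .inr ⟨_, _, _, _, rfl, rfl, hb1, hb2⟩⟩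

lemma bisim_par {p p' q q' : Proc L M} (hp : Bisim p p') (hq : Bisim q q') :
    Bisim (.par p q) (.par p' q') :=
  ⟨ParRel, parRel_isBisim, .inr ⟨_, _, _, _, rfl, rfl, hp, hq⟩⟩

/-- Relation used for alternative composition. -/
def AltRel : Proc L M → Proc L M → Prop := fun x y =>
  Bisim x y ∨ ∃ p p' q q', x = .alt p q ∧ y = .alt p' q' ∧ Bisim p p' ∧ Bisim q q'

lemma altRel_isBisim : IsBisim (AltRel (L := L) (M := M)) := by
  constructor
  · rintro x y (h | ⟨p, p', q, q', rfl, rfl, hp, hq⟩)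
    · exact .inl (bisim_symm h)
    · exact .inr ⟨p', p, q', q, rfl, rfl, bisim_symm hp, bisim_symm hq⟩
  · rintro x y a o (h | ⟨p, p', q, q', rfl, rfl, hp, hq⟩) hs
    · obtain ⟨o', ho', hrel⟩ := bisim_step h hs
      exact ⟨o', ho', optRel_mono (fun _ _ h => .inl h) hrel⟩
    · cases hs with
      | altL h1 =>
        obtain ⟨o', ho', hrel⟩ := bisim_step hp h1
        exact ⟨o', .altL ho', optRel_mono (fun _ _ h => .inl h) hrel⟩
      | altR h1 =>
        obtain ⟨o', ho', hrel⟩ := bisim_step hq h1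
        exact ⟨o', .altR ho', optRel_mono (fun _ _ h => .inl h) hrel⟩

/-- Relation used for sequential composition. -/
def SeqRel : Proc L M → Proc L M → Prop := fun x y =>
  Bisim x y ∨ ∃ p p' q q', x = .seq p q ∧ y = .seq p' q' ∧ Bisim p p' ∧ Bisim q q'

lemma seqRel_isBisim : IsBisim (SeqRel (L := L) (M := M)) := by
  constructor
  · rintro x y (h | ⟨p, p', q, q', rfl, rfl, hp, hq⟩)
    · exact .inl (bisim_symm h)
    · exact .inr ⟨p', p, q', q, rfl, rfl, bisim_symm hp, bisim_symm hq⟩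
  · rintro x y a o (h | ⟨p, p', q, q', rfl, rfl, hp, hq⟩) hs
    · obtain ⟨o', ho', hrel⟩ := bisim_step h hs
      exact ⟨o', ho', optRel_mono (fun _ _ h => .inl h) hrel⟩
    · cases hs with
      | seqT h1 => exact ⟨_, .seqT (bisim_step_none hp h1), .inl hq⟩
      | seqS h1 =>
        obtain ⟨p₁', h1', hb⟩ := bisim_step_some hp h1
        exact ⟨_, .seqS h1', .inr ⟨_, _, _, _, rfl, rfl, hb, hq⟩⟩

/-- Relation used for left merge. -/
def LRel : Proc L M → Proc L M → Prop := fun x y =>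
  ParRel x y ∨ ∃ p p' q q', x = .leftm p q ∧ y = .leftm p' q' ∧ Bisim p p' ∧ Bisim q q'

lemma lRel_isBisim : IsBisim (LRel (L := L) (M := M)) := by
  constructor
  · rintro x y (h | ⟨p, p', q, q', rfl, rfl, hp, hq⟩)
    · exact .inl (parRel_isBisim.1 _ _ h)
    · exact .inr ⟨p', p, q', q, rfl, rfl, bisim_symm hp, bisim_symm hq⟩
  · rintro x y a o (h | ⟨p, p', q, q', rfl, rfl, hp, hq⟩) hs
    · obtain ⟨o', ho', hrel⟩ := parRel_isBisim.2 _ _ _ _ h hs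
      exact ⟨o', ho', optRel_mono (fun _ _ h => .inl h) hrel⟩
    · cases hs with
      | leftmT h1 => exact ⟨_, .leftmT (bisim_step_none hp h1), .inl (.inl hq)⟩
      | leftmS h1 =>
        obtain ⟨p₁', h1', hb⟩ := bisim_step_some hp h1
        exact ⟨_, .leftmS h1', .inl (.inr ⟨_, _, _, _, rfl, rfl, hb, hq⟩)⟩

/-- Relation used for communication merge. -/
def CRel : Proc L M → Proc L M → Prop := fun x y =>
  ParRel x y ∨ ∃ p p' q q', x = .cm p q ∧ y = .cm p' q' ∧ Bisim p p' ∧ Bisim q q'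

lemma cRel_isBisim : IsBisim (CRel (L := L) (M := M)) := by
  constructor
  · rintro x y (h | ⟨p, p', q, q', rfl, rfl, hp, hq⟩)
    · exact .inl (parRel_isBisim.1 _ _ h)
    · exact .inr ⟨p', p, q', q, rfl, rfl, bisim_symm hp, bisim_symm hq⟩
  · rintro x y a o (h | ⟨p, p', q, q', rfl, rfl, hp, hq⟩) hs
    · obtain ⟨o', ho', hrel⟩ := parRel_isBisim.2 _ _ _ _ h hs
      exact ⟨o', ho', optRel_mono (fun _ _ h => .inl h) hrel⟩
    · cases hs with
      | cmTT hc h1 h2 =>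
        exact ⟨_, .cmTT hc (bisim_step_none hp h1) (bisim_step_none hq h2), trivial⟩
      | cmTS hc h1 h2 =>
        obtain ⟨q₁', h2', hb⟩ := bisim_step_some hq h2
        exact ⟨_, .cmTS hc (bisim_step_none hp h1) h2', .inl (.inl hb)⟩
      | cmST hc h1 h2 =>
        obtain ⟨p₁', h1', hb⟩ := bisim_step_some hp h1
        exact ⟨_, .cmST hc h1' (bisim_step_none hq h2), .inl (.inl hb)⟩
      | cmSS hc h1 h2 =>
        obtain ⟨p₁', h1', hb1⟩ := bisim_step_some hp h1
        obtain ⟨q₁', h2', hb2⟩ := bisim_step_some hq h2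
        exact ⟨_, .cmSS hc h1' h2', .inl (.inr ⟨_, _, _, _, rfl, rfl, hb1, hb2⟩)⟩

/-- Relation used for encapsulation. -/
def ERel : Proc L M → Proc L M → Prop := fun x y =>
  ∃ H p q, x = .encap H p ∧ y = .encap H q ∧ Bisim p q

lemma eRel_isBisim : IsBisim (ERel (L := L) (M := M)) := by
  constructor
  · rintro x y ⟨H, p, q, rfl, rfl, h⟩
    exact ⟨H, q, p, rfl, rfl, bisim_symm h⟩
  · rintro x y a o ⟨H, p, q, rfl, rfl, h⟩ hs
    cases hs with
    | encap h1 hn =>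
      rename_i o₀
      cases o₀ with
      | none =>
        exact ⟨none, Step.encap (bisim_step_none h h1) hn, trivial⟩
      | some p₁ =>
        obtain ⟨q₁, h1', hb⟩ := bisim_step_some h h1
        exact ⟨some (.encap H q₁), Step.encap h1' hn, ⟨H, p₁, q₁, rfl, rfl, hb⟩⟩

/-- Relation used for interface-compliant encapsulation. -/
def IRel : Proc L M → Proc L M → Prop := fun x y =>
  ∃ I p q, x = .iencap I p ∧ y = .iencap I q ∧ Bisim p q

lemma iRel_isBisim : IsBisim (IRel (L := L) (M := M)) := by
  constructor
  · rintro x y ⟨I, p, q, rfl, rfl, h⟩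
    exact ⟨I, q, p, rfl, rfl, bisim_symm h⟩
  · rintro x y a o ⟨I, p, q, rfl, rfl, h⟩ hs
    cases hs with
    | iencap h1 hn =>
      rename_i o₀
      cases o₀ with
      | none =>
        exact ⟨none, Step.iencap (bisim_step_none h h1) hn, trivial⟩
      | some p₁ =>
        obtain ⟨q₁, h1', hb⟩ := bisim_step_some h h1
        exact ⟨some (.iencap I q₁), Step.iencap h1' hn, ⟨I, p₁, q₁, rfl, rfl, hb⟩⟩

end Helpers

/-- Bisimilarity is a congruence with respect to alternative composition,
sequential composition, parallel composition (with synchronization of matching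
active/passive actions), left merge, communication merge, encapsulation `∂_H`,
and interface-compliant encapsulation `∂_I`. -/
theorem bisim_congruence (L M : Type) :
    (∀ p p' q q' : Proc L M, Bisim p p' → Bisim q q' → Bisim (.alt p q) (.alt p' q')) ∧
    (∀ p p' q q' : Proc L M, Bisim p p' → Bisim q q' → Bisim (.seq p q) (.seq p' q')) ∧
    (∀ p p' q q' : Proc L M, Bisim p p' → Bisim q q' → Bisim (.par p q) (.par p' q')) ∧
    (∀ p p' q q' : Proc L M, Bisim p p' → Bisim q q' → Bisim (.leftm p q) (.leftm p' q')) ∧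
    (∀ p p' q q' : Proc L M, Bisim p p' → Bisim q q' → Bisim (.cm p q) (.cm p' q')) ∧
    (∀ (H : Set (Act L M)) (p p' : Proc L M), Bisim p p' → Bisim (.encap H p) (.encap H p')) ∧
    (∀ (I : IFace L M) (p p' : Proc L M), Bisim p p' → Bisim (.iencap I p) (.iencap I p')) := by
  refine ⟨?_, ?_, ?_, ?_, ?_, ?_, ?_⟩
  · exact fun p p' q q' hp hq => ⟨AltRel, altRel_isBisim, .inr ⟨_, _, _, _, rfl, rfl, hp, hq⟩⟩
  · exact fun p p' q q' hp hq => ⟨SeqRel, seqRel_isBisim, .inr ⟨_, _, _, _, rfl, rfl, hp, hq⟩⟩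
  · exact fun p p' q q' hp hq => bisim_par hp hq
  · exact fun p p' q q' hp hq => ⟨LRel, lRel_isBisim, .inr ⟨_, _, _, _, rfl, rfl, hp, hq⟩⟩
  · exact fun p p' q q' hp hq => ⟨CRel, cRel_isBisim, .inr ⟨_, _, _, _, rfl, rfl, hp, hq⟩⟩
  · exact fun H p p' hp => ⟨ERel, eRel_isBisim, ⟨H, _, _, rfl, rfl, hp⟩⟩
  · exact fun I p p' hp => ⟨IRel, iRel_isBisim, ⟨I, _, _, rfl, rfl, hp⟩⟩
end
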